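/- Let n ≥ 4, p = p₀(n) = (n+1+√(n²+10n−7))/(2(n−1)), let R > 0 with 8R ≥ 1, let j ≥ 1 be an integer with a_j = 3·4^{j−1} − 1, let A > 0, and set D = 3² · 2^{3n−2−3(n−1)p/2}. Suppose F ∈ C²([a_jR, T)) satisfies F'(a_jR) ≥ 0, F((a_j+1)R) ≥ 0, and F''(t) ≥ A (t − a_jR)^{(n−1)(1−p/2)} ( log( (t+(a_j−2)R) / (2(a_j−1)R) ) )^{(p^j−1)/(p−1)} for a_jR ≤ t < T. Then for all t with (2(a_j+2)R)² ≤ t < T one has F(t) ≥ ( A / (16^j D) ) · ( (1/2) log t )^{(p^j−1)/(p−1)} · t^{ n+1−(n−1)p/2}. -/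

import Mathlib

/-- `a_j = 3·4^{j-1} - 1`. -/
noncomputable def aseq (j : ℕ) : ℝ := 3 * 4 ^ (j - 1) - 1

/-- `D = 3²·2^{3n-2-3(n-1)p/2}`. -/
noncomputable def Dconst (n : ℕ) (p : ℝ) : ℝ :=
  3 ^ 2 * (2 : ℝ) ^ (3 * (n : ℝ) - 2 - 3 * ((n : ℝ) - 1) * p / 2)

/-!
With `α = (n-1)(1-p/2)`, `q = (p^j-1)/(p-1)` and `h = t/(a_j+2)`: on `[a_j h, (a_j+1) h]` the
point `u` is at least `t/8` away from `a_jR` and the argument of the logarithm is at least `√t`,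
so there `F'' ≥ m := A (t/8)^α ((1/2) log t)^q`. Since `F'' ≥ 0` and `F'(a_jR) ≥ 0`, integrating
once gives `F' ≥ m h` on `[(a_j+1) h, t]`, and integrating again, with
`F((a_j+1)h) ≥ F((a_j+1)R) ≥ 0`, gives `F(t) ≥ m h²`. As `a_j + 2 ≤ 4^j` and `D = 18 · 8^α`,
this exceeds the claimed bound.
-/

open Set Real

section MeanValue

variable {D : Set ℝ} [D.OrdConnected]

theorem mul_sub_le_sub_of_hasDerivWithinAt {f f' : ℝ → ℝ}
    (hf : ∀ x ∈ D, HasDerivWithinAt f (f' x) D x) {m x y : ℝ} (hx : x ∈ D) (hy : y ∈ D)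
    (hxy : x ≤ y) (hm : ∀ z ∈ Ioo x y, m ≤ f' z) : m * (y - x) ≤ f y - f x := by
  have hsub : Icc x y ⊆ D := Set.Icc_subset D hx hy
  have hderiv : ∀ z ∈ Ioo x y, HasDerivAt f (f' z) z := fun z hz =>
    (hf z (hsub (Ioo_subset_Icc_self hz))).hasDerivAt
      (Filter.mem_of_superset (Icc_mem_nhds hz.1 hz.2) hsub)
  refine (convex_Icc x y).mul_sub_le_image_sub_of_le_deriv
    (fun z hz => (hf z (hsub hz)).continuousWithinAt.mono hsub) ?_ ?_
    x (left_mem_Icc.2 hxy) y (right_mem_Icc.2 hxy) hxy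
  · rw [interior_Icc]
    exact fun z hz => (hderiv z hz).differentiableAt.differentiableWithinAt
  · rw [interior_Icc]
    intro z hz
    rw [(hderiv z hz).deriv]
    exact hm z hz

theorem monotoneOn_of_hasDerivWithinAt_nonneg' {f f' : ℝ → ℝ}
    (hf : ∀ x ∈ D, HasDerivWithinAt f (f' x) D x) (hf' : ∀ x ∈ D, 0 ≤ f' x) :
    MonotoneOn f D := fun x hx y hy hxy => by
  have := mul_sub_le_sub_of_hasDerivWithinAt hf hx hy hxy
    fun z hz => hf' z (Set.Icc_subset D hx hy (Ioo_subset_Icc_self hz))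
  linarith

theorem mul_sub_mul_sub_le_of_le_secondDeriv {F F' F'' : ℝ → ℝ}
    (hF : ∀ x ∈ D, HasDerivWithinAt F (F' x) D x)
    (hF' : ∀ x ∈ D, HasDerivWithinAt F' (F'' x) D x)
    (hF''0 : ∀ x ∈ D, 0 ≤ F'' x) {c b u s t m : ℝ} (hc : c ∈ D) (ht : t ∈ D)
    (hF'c : 0 ≤ F' c) (hFb : 0 ≤ F b) (hcb : c ≤ b) (hbs : b ≤ s) (hcu : c ≤ u)
    (hus : u ≤ s) (hst : s ≤ t) (hm : ∀ x ∈ Icc u s, m ≤ F'' x) :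
    m * (s - u) * (t - s) ≤ F t := by
  have mem : ∀ x, c ≤ x → x ≤ t → x ∈ D := fun x h₁ h₂ => Set.Icc_subset D hc ht ⟨h₁, h₂⟩
  have hs : s ∈ D := mem s (hcu.trans hus) hst
  have hF'mono := monotoneOn_of_hasDerivWithinAt_nonneg' hF' hF''0
  have hF'nonneg : ∀ x, c ≤ x → x ≤ t → 0 ≤ F' x := fun x h₁ h₂ =>
    hF'c.trans (hF'mono hc (mem x h₁ h₂) h₁)
  have hF's : m * (s - u) ≤ F' s := by
    have := mul_sub_le_sub_of_hasDerivWithinAt hF' (mem u hcu (hus.trans hst)) hs hus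
      fun x hx => hm x (Ioo_subset_Icc_self hx)
    linarith [hF'nonneg u hcu (hus.trans hst)]
  have hFs : 0 ≤ F s := by
    have := mul_sub_le_sub_of_hasDerivWithinAt hF (mem b hcb (hbs.trans hst)) hs hbs
      fun x hx => hF'nonneg x (hcb.trans hx.1.le) (hx.2.le.trans hst)
    linarith
  have := mul_sub_le_sub_of_hasDerivWithinAt hF hs ht hst
    fun x hx => hF's.trans (hF'mono hs (mem x (hcu.trans (hus.trans hx.1.le)) hx.2.le) hx.1.le)
  linarith

end MeanValue

noncomputable def p₀ (n : ℝ) : ℝ := (n + 1 + √(n ^ 2 + 10 * n - 7)) / (2 * (n - 1))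

theorem one_lt_p₀ {n : ℝ} (hn : 4 ≤ n) : 1 < p₀ n := by
  have hsqrt : n - 3 < √(n ^ 2 + 10 * n - 7) := by
    rw [← sqrt_sq (by linarith : 0 ≤ n - 3)]
    exact sqrt_lt_sqrt (by positivity) (by nlinarith)
  rw [p₀, lt_div_iff₀ (by linarith)]
  linarith

theorem p₀_le_two {n : ℝ} (hn : 4 ≤ n) : p₀ n ≤ 2 := by
  have hsqrt : √(n ^ 2 + 10 * n - 7) ≤ 3 * n - 5 := by
    rw [← sqrt_sq (by linarith : 0 ≤ 3 * n - 5)]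
    exact sqrt_le_sqrt (by nlinarith)
  rw [p₀, div_le_iff₀ (by linarith)]
  linarith

theorem two_le_aseq (j : ℕ) : 2 ≤ aseq j := by
  have : (1 : ℝ) ≤ 4 ^ (j - 1) := one_le_pow₀ (by norm_num)
  rw [aseq]
  linarith

theorem aseq_add_two_le {j : ℕ} (hj : 1 ≤ j) : aseq j + 2 ≤ 4 ^ j := by
  obtain ⟨k, rfl⟩ := Nat.exists_eq_add_of_le' hj
  have : (1 : ℝ) ≤ 4 ^ k := one_le_pow₀ (by norm_num)
  rw [aseq, Nat.add_sub_cancel, pow_succ]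
  linarith

theorem sq_aseq_add_two_le {j : ℕ} (hj : 1 ≤ j) : (aseq j + 2) ^ 2 ≤ 16 ^ j := by
  rw [show (16 : ℝ) ^ j = (4 ^ j) ^ 2 by rw [← pow_mul, mul_comm, pow_mul]; norm_num]
  have := two_le_aseq j
  gcongr
  exact aseq_add_two_le hj

theorem Dconst_eq (n : ℕ) (p : ℝ) : Dconst n p = 18 * 8 ^ (((n : ℝ) - 1) * (1 - p / 2)) := by
  rw [Dconst, show (8 : ℝ) = 2 ^ (3 : ℝ) by norm_num, ← rpow_mul (by norm_num),
    show 3 * (n : ℝ) - 2 - 3 * ((n : ℝ) - 1) * p / 2 = 1 + 3 * (((n : ℝ) - 1) * (1 - p / 2)) by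
      ring, rpow_add (by norm_num), rpow_one]
  ring

theorem div_mul_Dconst_mul_rpow_le {n : ℕ} {p A L q t b K : ℝ} (hA : 0 ≤ A) (hL : 0 ≤ L)
    (ht : 0 < t) (hb : 0 < b) (hbK : b ^ 2 ≤ K) :
    A / (K * Dconst n p) * L ^ q * t ^ ((n : ℝ) + 1 - ((n : ℝ) - 1) * p / 2) ≤
      A * (t / 8) ^ (((n : ℝ) - 1) * (1 - p / 2)) * L ^ q * (t / b) * (t / b) := by
  set α := ((n : ℝ) - 1) * (1 - p / 2)
  have hsq : t ^ 2 / (K * 18) ≤ t / b * (t / b) := by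
    rw [div_mul_div_comm, ← sq, ← sq]
    gcongr
    linarith [sq_nonneg b]
  calc _ = A * (t / 8) ^ α * L ^ q * (t ^ 2 / (K * 18)) := by
        rw [show Dconst n p = 18 * 8 ^ α from Dconst_eq n p,
          show (n : ℝ) + 1 - ((n : ℝ) - 1) * p / 2 = α + 2 by ring,
          rpow_add ht, rpow_two, div_rpow ht.le (by norm_num)]
        ring
    _ ≤ A * (t / 8) ^ α * L ^ q * (t / b * (t / b)) := by gcongr
    _ = _ := by ring

theorem two_mul_mul_sqrt_le_div {b R t : ℝ} (hb : 0 < b) (hR : 0 ≤ R)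
    (ht : (2 * b * R) ^ 2 ≤ t) : 2 * R * √t ≤ t / b := by
  have hsqrt : 2 * b * R ≤ √t := by
    simpa [sqrt_sq (by positivity : 0 ≤ 2 * b * R)] using sqrt_le_sqrt ht
  rw [le_div_iff₀ hb]
  calc 2 * R * √t * b = 2 * b * R * √t := by ring
    _ ≤ √t * √t := mul_le_mul_of_nonneg_right hsqrt (sqrt_nonneg t)
    _ = t := mul_self_sqrt ((sq_nonneg _).trans ht)

theorem one_le_of_sq_le {a R t : ℝ} (ha : 2 ≤ a) (h8R : 1 ≤ 8 * R)
    (ht : (2 * (a + 2) * R) ^ 2 ≤ t) : 1 ≤ t := by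
  have : 1 ≤ 2 * (a + 2) * R := by nlinarith
  nlinarith

theorem two_mul_le_div_of_sq_le {a R t : ℝ} (ha : 2 ≤ a) (hR : 0 < R) (h8R : 1 ≤ 8 * R)
    (ht : (2 * (a + 2) * R) ^ 2 ≤ t) : 2 * R ≤ t / (a + 2) := by
  nlinarith [two_mul_mul_sqrt_le_div (by linarith) hR.le ht,
    one_le_sqrt.2 (one_le_of_sq_le ha h8R ht)]

theorem log_weight_nonneg {A α q a R u : ℝ} (hA : 0 ≤ A) (ha : 2 ≤ a) (hR : 0 < R)
    (hu : a * R ≤ u) :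
    0 ≤ A * (u - a * R) ^ α * log ((u + (a - 2) * R) / (2 * (a - 1) * R)) ^ q := by
  have harg : 1 ≤ (u + (a - 2) * R) / (2 * (a - 1) * R) := by
    rw [le_div_iff₀ (by nlinarith)]
    linarith
  have := log_nonneg harg
  have : 0 ≤ u - a * R := by linarith
  positivity

theorem log_weight_le {A α q a R t u : ℝ} (hA : 0 ≤ A) (hα : 0 ≤ α) (hq : 0 ≤ q)
    (ha : 2 ≤ a) (hR : 0 < R) (h8R : 1 ≤ 8 * R) (ht : (2 * (a + 2) * R) ^ 2 ≤ t)
    (hu : a * (t / (a + 2)) ≤ u) :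
    A * (t / 8) ^ α * (1 / 2 * log t) ^ q ≤
      A * (u - a * R) ^ α * log ((u + (a - 2) * R) / (2 * (a - 1) * R)) ^ q := by
  have hh := two_mul_mul_sqrt_le_div (by linarith) hR.le ht
  have h1 := one_le_sqrt.2 (one_le_of_sq_le ha h8R ht)
  have h2R := two_mul_le_div_of_sq_le ha hR h8R ht
  have ht0 : 0 ≤ t := (sq_nonneg _).trans ht
  have htt : t = (a + 2) * (t / (a + 2)) := by field_simp
  have hdist : t / 8 ≤ u - a * R := by
    nlinarith [mul_le_mul_of_nonneg_left h2R (by linarith : 0 ≤ 7 * a - 2)]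
  have harg : √t ≤ (u + (a - 2) * R) / (2 * (a - 1) * R) := by
    rw [le_div_iff₀ (by nlinarith)]
    nlinarith
  rw [show 1 / 2 * log t = log √t by rw [log_sqrt ht0]; ring]
  have := log_nonneg h1
  have : 0 ≤ u - a * R := (by positivity : (0 : ℝ) ≤ t / 8).trans hdist
  gcongr

theorem double_integration_step_general
    (n : ℕ) (hn : 4 ≤ n) (p R A T : ℝ) (j : ℕ) (hj : 1 ≤ j)
    (hp : p = ((n : ℝ) + 1 + Real.sqrt ((n : ℝ) ^ 2 + 10 * (n : ℝ) - 7)) / (2 * ((n : ℝ) - 1)))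
    (hR : 0 < R) (h8R : 1 ≤ 8 * R) (hA : 0 < A)
    (F F' F'' : ℝ → ℝ)
    (hF' : ∀ t ∈ Set.Ico (aseq j * R) T, HasDerivWithinAt F (F' t) (Set.Ico (aseq j * R) T) t)
    (hF'' : ∀ t ∈ Set.Ico (aseq j * R) T, HasDerivWithinAt F' (F'' t) (Set.Ico (aseq j * R) T) t)
    (hF'0 : 0 ≤ F' (aseq j * R))
    (hF0 : 0 ≤ F ((aseq j + 1) * R))
    (hlow : ∀ t, aseq j * R ≤ t → t < T →
      A * (t - aseq j * R) ^ (((n : ℝ) - 1) * (1 - p / 2)) *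
          Real.log ((t + (aseq j - 2) * R) / (2 * (aseq j - 1) * R)) ^
            ((p ^ j - 1) / (p - 1)) ≤ F'' t) :
    ∀ t, (2 * (aseq j + 2) * R) ^ 2 ≤ t → t < T →
      A / (16 ^ j * Dconst n p) *
          (1 / 2 * Real.log t) ^ ((p ^ j - 1) / (p - 1)) *
          t ^ ((n : ℝ) + 1 - ((n : ℝ) - 1) * p / 2) ≤ F t := by
  intro t ht htT
  set a := aseq j
  set α := ((n : ℝ) - 1) * (1 - p / 2)
  set q := (p ^ j - 1) / (p - 1)
  set h := t / (a + 2)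
  have hn' : (4 : ℝ) ≤ n := by exact_mod_cast hn
  have hp₀ : p = p₀ n := hp
  have hp1 : 1 < p := hp₀ ▸ one_lt_p₀ hn'
  have hα : 0 ≤ α := mul_nonneg (by linarith) (by linarith [hp₀ ▸ p₀_le_two hn'])
  have hq : 0 ≤ q := div_nonneg (by linarith [one_le_pow₀ (n := j) hp1.le]) (by linarith)
  have ha : 2 ≤ a := two_le_aseq j
  have h2R : 2 * R ≤ h := two_mul_le_div_of_sq_le ha hR h8R ht
  have htt : t = (a + 2) * h := (mul_div_cancel₀ t (by linarith)).symm
  have hFt : A * (t / 8) ^ α * (1 / 2 * log t) ^ q * ((a + 1) * h - a * h) *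
      (t - (a + 1) * h) ≤ F t :=
    mul_sub_mul_sub_le_of_le_secondDeriv hF' hF''
      (fun x hx => (log_weight_nonneg hA.le ha hR hx.1).trans (hlow x hx.1 hx.2))
      (b := (a + 1) * R) ⟨le_rfl, by nlinarith⟩ ⟨by nlinarith, htT⟩ hF'0 hF0
      (by nlinarith) (by nlinarith) (by nlinarith) (by nlinarith) (by nlinarith)
      fun u hu => (log_weight_le hA.le hα hq ha hR h8R ht hu.1).trans
        (hlow u (by nlinarith [hu.1]) (by nlinarith [hu.2]))
  have ht1 : 1 ≤ t := one_le_of_sq_le ha h8R ht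
  rw [show (a + 1) * h - a * h = h by ring, show t - (a + 1) * h = h by linarith] at hFt
  exact (div_mul_Dconst_mul_rpow_le hA.le (by linarith [log_nonneg ht1]) (by linarith)
    (by linarith) (sq_aseq_add_two_le hj)).trans hFt

/-- **Double integration of the iterated bound** (Proposition 4.1).
A logarithmic lower bound for `F''` on `[a_jR, T)` with constant `A`, together
with `F'(a_jR) ≥ 0` and `F((a_j+1)R) ≥ 0`, yields, for `(2(a_j+2)R)² ≤ t < T`,
`F(t) ≥ (A / (16^j D)) ((1/2) log t)^{(p^j-1)/(p-1)} t^{n+1-(n-1)p/2}`. -/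
theorem double_integration_step
    (n : ℕ) (hn : 4 ≤ n) (p R A T : ℝ) (j : ℕ) (hj : 1 ≤ j)
    (hp : p = ((n : ℝ) + 1 + Real.sqrt ((n : ℝ) ^ 2 + 10 * (n : ℝ) - 7)) / (2 * ((n : ℝ) - 1)))
    (hR : 0 < R) (h8R : 1 ≤ 8 * R) (hA : 0 < A)
    (F F' F'' : ℝ → ℝ)
    (hF' : ∀ t ∈ Set.Ico (aseq j * R) T, HasDerivWithinAt F (F' t) (Set.Ico (aseq j * R) T) t)
    (hF'' : ∀ t ∈ Set.Ico (aseq j * R) T, HasDerivWithinAt F' (F'' t) (Set.Ico (aseq j * R) T) t)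
    (hcont : ContinuousOn F'' (Set.Ico (aseq j * R) T))
    (hF'0 : 0 ≤ F' (aseq j * R))
    (hF0 : 0 ≤ F ((aseq j + 1) * R))
    (hlow : ∀ t, aseq j * R ≤ t → t < T →
      A * (t - aseq j * R) ^ (((n : ℝ) - 1) * (1 - p / 2)) *
          Real.log ((t + (aseq j - 2) * R) / (2 * (aseq j - 1) * R)) ^
            ((p ^ j - 1) / (p - 1)) ≤ F'' t) :
    ∀ t, (2 * (aseq j + 2) * R) ^ 2 ≤ t → t < T →
      A / (16 ^ j * Dconst n p) *
          (1 / 2 * Real.log t) ^ ((p ^ j - 1) / (p - 1)) *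
          t ^ ((n : ℝ) + 1 - ((n : ℝ) - 1) * p / 2) ≤ F t :=
  double_integration_step_general n hn p R A T j hj hp hR h8R hA F F' F'' hF' hF'' hF'0 hF0 hlow
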